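/- arXiv:2306.04761 — 2 statements merged into one kernel-verified Lean document; each statement's English description precedes it below -/
import Mathlib

section
/- With f = √(αβ) as above and M₀ the matrix of dd^c f(·, i·), every vector v orthogonal (for the standard inner product on ℝ²ⁿ) to both v₀ and w₀ = −J₀v₀ satisfies M₀ v = ((α+β)/√(αβ)) v, on the complement of L₁ ∪ L₂. -/
noncomputable section

/-- ℂⁿ as a real inner product space. -/
abbrev Cn (n : ℕ) := EuclideanSpace ℂ (Fin n)

/-- α(x,y) = Σ xᵢ², the squared distance to L₁ = iℝⁿ. -/
def alph (n : ℕ) (z : Cn n) : ℝ := ∑ i, (z i).re ^ 2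

/-- β(x,y) = Σ_{i≤k} xᵢ² + Σ_{i>k} yᵢ² (0-based: i < k resp. k ≤ i). -/
def bet (n k : ℕ) (z : Cn n) : ℝ :=
  ∑ i : Fin n, if (i : ℕ) < k then (z i).re ^ 2 else (z i).im ^ 2

/-- The Levi quadratic form of a real function `f` at `z` on the (real) vector `v`:
`dd^c f(v, iv) = Hess f(v,v) + Hess f(iv,iv)`.  Weak plurisubharmonicity of `f` at `z`
(positive semidefiniteness of the complex Hessian `(∂²f/∂zᵢ∂z̄ⱼ)`) is equivalent to
`0 ≤ levi n f z v` for all `v`. -/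
def levi (n : ℕ) (f : Cn n → ℝ) (z v : Cn n) : ℝ :=
  iteratedFDeriv ℝ 2 f z ![v, v] + iteratedFDeriv ℝ 2 f z ![Complex.I • v, Complex.I • v]

/-- The symmetric bilinear form `dd^c f(·, i·)(v,w) = Hess f(v,w) + Hess f(iv,iw)`,
whose matrix in the standard real basis of ℝ²ⁿ is `M₀`. -/
def leviB (n : ℕ) (f : Cn n → ℝ) (z v w : Cn n) : ℝ :=
  iteratedFDeriv ℝ 2 f z ![v, w] + iteratedFDeriv ℝ 2 f z ![Complex.I • v, Complex.I • w]
/-- Σ_{i ≤ k} xᵢ² (0-based: i < k). -/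
def sxk (n k : ℕ) (z : Cn n) : ℝ := ∑ i : Fin n, if (i : ℕ) < k then (z i).re ^ 2 else 0

/-- v₀ = Σᵢ (α yᵢ δ_{i>k} ∂/∂xᵢ + (β − α δ_{i≤k}) xᵢ ∂/∂yᵢ), as a vector of ℂⁿ = ℝ²ⁿ. -/
def v0 (n k : ℕ) (z : Cn n) : Cn n :=
  (EuclideanSpace.equiv (Fin n) ℂ).symm fun i =>
    ((if k ≤ (i : ℕ) then alph n z * (z i).im else 0 : ℝ) : ℂ) +
      (((bet n k z - if (i : ℕ) < k then alph n z else 0) * (z i).re : ℝ) : ℂ) * Complex.I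

/-- v₁ = Σᵢ (α yᵢ δ_{i>k} ∂/∂xᵢ − (β + α δ_{i≤k}) xᵢ ∂/∂yᵢ). -/
def v1 (n k : ℕ) (z : Cn n) : Cn n :=
  (EuclideanSpace.equiv (Fin n) ℂ).symm fun i =>
    ((if k ≤ (i : ℕ) then alph n z * (z i).im else 0 : ℝ) : ℂ) -
      (((bet n k z + if (i : ℕ) < k then alph n z else 0) * (z i).re : ℝ) : ℂ) * Complex.I

/-! Write α and β as the quadratic forms of symmetric bilinear forms `A`, `B`. Differentiating
`√(A q q * B q q)` twice gives `(β A(v,w) + α B(v,w)) / √(αβ)` plus correction terms built from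
`A(z,·)` and `B(z,·)`, and these cancel as soon as `β A(z,v) = α B(z,v)`. Orthogonality of `v` to
`w₀` is exactly this condition for `v`, orthogonality to `v₀` is it for `iv`, and
`A(v,w) + A(iv,iw) = B(v,w) + B(iv,iw) = ⟪v,w⟫`. -/

namespace ContinuousLinearMap

variable {E : Type*} [NormedAddCommGroup E] [NormedSpace ℝ E]
  (A B : E →L[ℝ] E →L[ℝ] ℝ)

theorem hasFDerivAt_apply_self (hA : ∀ u v, A u v = A v u) (z : E) :
    HasFDerivAt (fun q => A q q) ((2 : ℝ) • A z) z := by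
  refine (A.hasFDerivAt_of_bilinear (hasFDerivAt_id z) (hasFDerivAt_id z)).congr_fderiv ?_
  ext v
  simp [two_smul, hA v z]

def gradSqrtMul (q : E) : E →L[ℝ] ℝ :=
  (√(A q q * B q q))⁻¹ • (B q q • A q + A q q • B q)

variable {A B}

theorem hasFDerivAt_sqrt_mul_apply_self (hA : ∀ u v, A u v = A v u) (hB : ∀ u v, B u v = B v u)
    {q : E} (hq : 0 < A q q * B q q) :
    HasFDerivAt (fun p => √(A p p * B p p)) (gradSqrtMul A B q) q := by
  refine (((A.hasFDerivAt_apply_self hA q).fun_mul (B.hasFDerivAt_apply_self hB q)).sqrt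
    hq.ne').congr_fderiv ?_
  have hs : √(A q q * B q q) ≠ 0 := (Real.sqrt_pos.mpr hq).ne'
  ext w
  simp only [gradSqrtMul, smul_apply, add_apply, smul_eq_mul]
  field_simp
  ring

theorem fderiv_fderiv_sqrt_mul_apply_self (hA : ∀ u v, A u v = A v u)
    (hB : ∀ u v, B u v = B v u) {z : E} (hz : 0 < A z z * B z z) :
    fderiv ℝ (fderiv ℝ fun q => √(A q q * B q q)) z = fderiv ℝ (gradSqrtMul A B) z := by
  have hcont : ContinuousAt (fun q => A q q * B q q) z :=
    ((A.hasFDerivAt_apply_self hA z).fun_mul (B.hasFDerivAt_apply_self hB z)).continuousAt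
  refine Filter.EventuallyEq.fderiv_eq ?_
  filter_upwards [hcont.preimage_mem_nhds (Ioi_mem_nhds hz)] with q hq
  exact (hasFDerivAt_sqrt_mul_apply_self hA hB hq).fderiv

theorem fderiv_fderiv_sqrt_mul_apply_self_apply (hA : ∀ u v, A u v = A v u)
    (hB : ∀ u v, B u v = B v u) {z : E} (hz : 0 < A z z * B z z) {v : E}
    (hv : B z z * A z v = A z z * B z v) (w : E) :
    fderiv ℝ (fderiv ℝ fun q => √(A q q * B q q)) z v w =
      (B z z * A v w + A z z * B v w) / √(A z z * B z z) := by
  have hg := (A.hasFDerivAt_apply_self hA z).fun_mul (B.hasFDerivAt_apply_self hB z)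
  have hs : √(A z z * B z z) ≠ 0 := (Real.sqrt_pos.mpr hz).ne'
  have hinv := (hasDerivAt_inv hs).comp_hasFDerivAt z (hg.sqrt hz.ne')
  have hsum := ((B.hasFDerivAt_apply_self hB z).smul A.hasFDerivAt).add
    ((A.hasFDerivAt_apply_self hA z).smul B.hasFDerivAt)
  have hgrad : HasFDerivAt (gradSqrtMul A B) _ z := hinv.smul hsum
  rw [fderiv_fderiv_sqrt_mul_apply_self hA hB hz, hgrad.fderiv]
  have ha : A z z ≠ 0 := left_ne_zero_of_mul hz.ne'
  have hb : B z z ≠ 0 := right_ne_zero_of_mul hz.ne'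
  have h2 : √(A z z * B z z) ^ 2 = A z z * B z z := Real.sq_sqrt hz.le
  simp only [Function.comp_apply, smul_add, one_div, mul_inv_rev, neg_smul, add_apply,
    smul_apply, smulRight_apply, smul_eq_mul, neg_apply]
  rw [h2]
  field_simp
  linear_combination (A z z * B z w - B z z * A z w) * hv

end ContinuousLinearMap

def reCoord (n : ℕ) (i : Fin n) : Cn n →L[ℝ] ℝ :=
  Complex.reCLM.comp ((EuclideanSpace.proj i).restrictScalars ℝ)

def imCoord (n : ℕ) (i : Fin n) : Cn n →L[ℝ] ℝ :=
  Complex.imCLM.comp ((EuclideanSpace.proj i).restrictScalars ℝ)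

@[simp] lemma reCoord_apply (n : ℕ) (i : Fin n) (v : Cn n) : reCoord n i v = (v i).re := rfl

@[simp] lemma imCoord_apply (n : ℕ) (i : Fin n) (v : Cn n) : imCoord n i v = (v i).im := rfl

def alphForm (n : ℕ) : Cn n →L[ℝ] Cn n →L[ℝ] ℝ :=
  ∑ i, (reCoord n i).smulRight (reCoord n i)

def betForm (n k : ℕ) : Cn n →L[ℝ] Cn n →L[ℝ] ℝ :=
  ∑ i : Fin n, if (i : ℕ) < k then (reCoord n i).smulRight (reCoord n i)
    else (imCoord n i).smulRight (imCoord n i)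

lemma alphForm_apply (n : ℕ) (u v : Cn n) : alphForm n u v = ∑ i, (u i).re * (v i).re := by
  simp [alphForm]

lemma betForm_apply (n k : ℕ) (u v : Cn n) :
    betForm n k u v =
      ∑ i : Fin n, if (i : ℕ) < k then (u i).re * (v i).re else (u i).im * (v i).im := by
  simp only [betForm, sum_apply]
  refine Finset.sum_congr rfl fun i _ => ?_
  split_ifs <;> simp

lemma alphForm_comm (n : ℕ) (u v : Cn n) : alphForm n u v = alphForm n v u := by
  simp only [alphForm_apply, mul_comm]

lemma betForm_comm (n k : ℕ) (u v : Cn n) : betForm n k u v = betForm n k v u := by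
  simp only [betForm_apply, mul_comm]

lemma alph_eq_alphForm (n : ℕ) (q : Cn n) : alph n q = alphForm n q q := by
  simp only [alph, alphForm_apply, sq]

lemma bet_eq_betForm (n k : ℕ) (q : Cn n) : bet n k q = betForm n k q q := by
  simp only [bet, betForm_apply, sq]

lemma inner_eq_sum_re_mul_re_add_im_mul_im (n : ℕ) (v w : Cn n) :
    (inner ℝ v w : ℝ) = ∑ i, ((v i).re * (w i).re + (v i).im * (w i).im) := by
  rw [PiLp.inner_apply]
  simp only [Complex.inner, Complex.mul_re, Complex.conj_re, Complex.conj_im]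
  exact Finset.sum_congr rfl fun i _ => by ring

lemma I_smul_apply (n : ℕ) (v : Cn n) (i : Fin n) :
    (Complex.I • v : Cn n) i = Complex.I * v i := rfl

lemma alphForm_add_alphForm_I_smul (n : ℕ) (v w : Cn n) :
    alphForm n v w + alphForm n (Complex.I • v) (Complex.I • w) = inner ℝ v w := by
  rw [inner_eq_sum_re_mul_re_add_im_mul_im, alphForm_apply, alphForm_apply,
    ← Finset.sum_add_distrib]
  refine Finset.sum_congr rfl fun i _ => ?_
  simp only [I_smul_apply, Complex.mul_re, Complex.I_re, Complex.I_im]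
  ring

lemma betForm_add_betForm_I_smul (n k : ℕ) (v w : Cn n) :
    betForm n k v w + betForm n k (Complex.I • v) (Complex.I • w) = inner ℝ v w := by
  rw [inner_eq_sum_re_mul_re_add_im_mul_im, betForm_apply, betForm_apply,
    ← Finset.sum_add_distrib]
  refine Finset.sum_congr rfl fun i _ => ?_
  simp only [I_smul_apply, Complex.mul_re, Complex.mul_im, Complex.I_re, Complex.I_im]
  split_ifs <;> ring

lemma v0_re (n k : ℕ) (z : Cn n) (i : Fin n) :
    (v0 n k z i).re = if k ≤ (i : ℕ) then alph n z * (z i).im else 0 := by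
  simp [v0]

lemma v0_im (n k : ℕ) (z : Cn n) (i : Fin n) :
    (v0 n k z i).im = (bet n k z - if (i : ℕ) < k then alph n z else 0) * (z i).re := by
  simp [v0]

lemma inner_v0 (n k : ℕ) (z v : Cn n) :
    (inner ℝ v (v0 n k z) : ℝ) =
      alph n z * betForm n k z (Complex.I • v) - bet n k z * alphForm n z (Complex.I • v) := by
  rw [inner_eq_sum_re_mul_re_add_im_mul_im, alphForm_apply, betForm_apply, Finset.mul_sum,
    Finset.mul_sum, ← Finset.sum_sub_distrib]
  refine Finset.sum_congr rfl fun i _ => ?_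
  simp only [I_smul_apply, v0_re, v0_im, Complex.mul_re, Complex.mul_im, Complex.I_re,
    Complex.I_im]
  split_ifs <;> first | omega | ring

lemma inner_neg_I_smul_v0 (n k : ℕ) (z v : Cn n) :
    (inner ℝ v (-(Complex.I • v0 n k z)) : ℝ) =
      bet n k z * alphForm n z v - alph n z * betForm n k z v := by
  rw [inner_eq_sum_re_mul_re_add_im_mul_im, alphForm_apply, betForm_apply, Finset.mul_sum,
    Finset.mul_sum, ← Finset.sum_sub_distrib]
  refine Finset.sum_congr rfl fun i _ => ?_
  simp only [PiLp.neg_apply, I_smul_apply, Complex.neg_re, Complex.neg_im, v0_re, v0_im,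
    Complex.mul_re, Complex.mul_im, Complex.I_re, Complex.I_im]
  split_ifs <;> first | omega | ring

theorem orthogonal_eigenspace_general (n k : ℕ) (z : Cn n)
    (h1 : alph n z ≠ 0) (h2 : bet n k z ≠ 0) (v : Cn n)
    (hv0 : (inner ℝ v (v0 n k z) : ℝ) = 0)
    (hw0 : (inner ℝ v (-(Complex.I • v0 n k z)) : ℝ) = 0) (w : Cn n) :
    leviB n (fun q => Real.sqrt (alph n q * bet n k q)) z v w =
      ((alph n z + bet n k z) / Real.sqrt (alph n z * bet n k z)) * (inner ℝ v w : ℝ) := by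
  have ha : 0 < alph n z :=
    (Finset.sum_nonneg fun i _ => sq_nonneg _).lt_of_ne' h1
  have hb : 0 < bet n k z :=
    (Finset.sum_nonneg fun i _ => by split_ifs <;> exact sq_nonneg _).lt_of_ne' h2
  rw [inner_v0] at hv0
  rw [inner_neg_I_smul_v0] at hw0
  rw [leviB, iteratedFDeriv_two_apply, iteratedFDeriv_two_apply]
  simp only [alph_eq_alphForm, bet_eq_betForm, Matrix.cons_val_zero, Matrix.cons_val_one]
    at ha hb hv0 hw0 ⊢
  have hz := mul_pos ha hb
  rw [ContinuousLinearMap.fderiv_fderiv_sqrt_mul_apply_self_apply (alphForm_comm n)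
      (betForm_comm n k) hz (by linarith) w,
    ContinuousLinearMap.fderiv_fderiv_sqrt_mul_apply_self_apply (alphForm_comm n)
      (betForm_comm n k) hz (by linarith) (Complex.I • w)]
  linear_combination
    (betForm n k z z / √(alphForm n z z * betForm n k z z)) * alphForm_add_alphForm_I_smul n v w +
    (alphForm n z z / √(alphForm n z z * betForm n k z z)) * betForm_add_betForm_I_smul n k v w

/-- outside L₁ ∪ L₂, every vector orthogonal to v₀ and w₀ = −J₀v₀
satisfies M₀ v = ((α+β)/√(αβ)) v, where M₀ is the matrix of dd^c √(αβ)(·, i·). -/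
theorem orthogonal_eigenspace (n k : ℕ) (hk : k ≤ n) (z : Cn n)
    (h1 : alph n z ≠ 0) (h2 : bet n k z ≠ 0) (v : Cn n)
    (hv0 : (inner ℝ v (v0 n k z) : ℝ) = 0)
    (hw0 : (inner ℝ v (-(Complex.I • v0 n k z)) : ℝ) = 0) (w : Cn n) :
    leviB n (fun q => Real.sqrt (alph n q * bet n k q)) z v w =
      ((alph n z + bet n k z) / Real.sqrt (alph n z * bet n k z)) * (inner ℝ v w : ℝ) :=
  orthogonal_eigenspace_general n k z h1 h2 v hv0 hw0 w
end
end

section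
/- The matrix M₁ representing (d√(αβ) ∧ d^c√(αβ))(·, i·) vanishes at a point (x,y) if and only if (x,y) ∈ L₁ ∪ L₂, i.e., if and only if α(x,y)β(x,y) = 0. -/
noncomputable section

/-- The symmetric bilinear form (df ∧ d^c f)(·, i·)(v,w)
    = df(v)df(w) + df(iv)df(iw), whose matrix is M₁. -/
def gradForm (n : ℕ) (f : Cn n → ℝ) (z v w : Cn n) : ℝ :=
  fderiv ℝ f z v * fderiv ℝ f z w +
    fderiv ℝ f z (Complex.I • v) * fderiv ℝ f z (Complex.I • w)
/-- The matrix M₁ of (d√(αβ) ∧ d^c√(αβ))(·, i·), extended by 0 over L₁ ∪ L₂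
(this is its continuous extension). -/
def M1ext (n k : ℕ) (z v w : Cn n) : ℝ :=
  if alph n z * bet n k z = 0 then 0
  else gradForm n (fun q => Real.sqrt (alph n q * bet n k q)) z v w


/-! Off `L₁ ∪ L₂` the function `f = √(αβ)` is differentiable and homogeneous of degree 2, so by
Euler's identity `df_z(z) = 2 f(z) > 0`, and then `M₁(z, z) = df_z(z)² + df_z(iz)² > 0`.
On `L₁ ∪ L₂` the matrix is zero by construction. -/

lemma fderiv_apply_self_of_homogeneous {E : Type*} [NormedAddCommGroup E] [NormedSpace ℝ E]
    {g : E → ℝ} {z : E} (p : ℕ) (hg : DifferentiableAt ℝ g z)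
    (hhom : ∀ t : ℝ, g (t • z) = t ^ p * g z) : fderiv ℝ g z z = p * g z := by
  have hline : HasDerivAt (fun t : ℝ => g (t • z)) (fderiv ℝ g z z) 1 := by
    have hg' : HasFDerivAt g (fderiv ℝ g z) ((1 : ℝ) • z) := by
      rw [one_smul]
      exact hg.hasFDerivAt
    have := hg'.comp_hasDerivAt (1 : ℝ) ((hasDerivAt_id (1 : ℝ)).smul_const z)
    rwa [one_smul] at this
  have hpow : HasDerivAt (fun t : ℝ => t ^ p * g z) (p * g z) 1 := by
    simpa using (hasDerivAt_pow p (1 : ℝ)).mul_const (g z)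
  exact hline.unique (by simpa only [hhom] using hpow)

lemma fderiv_eq_zero_of_gradForm_self_eq_zero {n : ℕ} {f : Cn n → ℝ} {z v : Cn n}
    (h : gradForm n f z v v = 0) : fderiv ℝ f z v = 0 := by
  unfold gradForm at h
  nlinarith [mul_self_nonneg (fderiv ℝ f z v), mul_self_nonneg (fderiv ℝ f z (Complex.I • v))]

lemma differentiable_alph (n : ℕ) : Differentiable ℝ (alph n) := by
  unfold alph
  fun_prop

lemma differentiable_bet (n k : ℕ) : Differentiable ℝ (bet n k) := by
  refine Differentiable.fun_sum fun i _ => ?_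
  split_ifs <;> fun_prop

lemma alph_nonneg (n : ℕ) (z : Cn n) : 0 ≤ alph n z :=
  Finset.sum_nonneg fun _ _ => sq_nonneg _

lemma bet_nonneg (n k : ℕ) (z : Cn n) : 0 ≤ bet n k z :=
  Finset.sum_nonneg fun _ _ => by split_ifs <;> exact sq_nonneg _

lemma alph_smul (n : ℕ) (t : ℝ) (z : Cn n) : alph n (t • z) = t ^ 2 * alph n z := by
  simp [alph, Finset.mul_sum, mul_pow]

lemma bet_smul (n k : ℕ) (t : ℝ) (z : Cn n) : bet n k (t • z) = t ^ 2 * bet n k z := by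
  simp [bet, Finset.mul_sum, mul_pow, mul_ite]

lemma sqrt_alph_mul_bet_smul (n k : ℕ) (t : ℝ) (z : Cn n) :
    √(alph n (t • z) * bet n k (t • z)) = t ^ 2 * √(alph n z * bet n k z) := by
  rw [alph_smul, bet_smul, show t ^ 2 * alph n z * (t ^ 2 * bet n k z)
    = (t ^ 2) ^ 2 * (alph n z * bet n k z) by ring, Real.sqrt_mul (by positivity),
    Real.sqrt_sq (by positivity)]

theorem M1_vanishes_iff_general (n k : ℕ) (z : Cn n) :
    (∀ v w : Cn n, M1ext n k z v w = 0) ↔ alph n z * bet n k z = 0 := by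
  refine ⟨fun h => ?_, fun hp v w => by rw [M1ext, if_pos hp]⟩
  by_contra hp
  have hpos : 0 < alph n z * bet n k z :=
    (mul_nonneg (alph_nonneg n z) (bet_nonneg n k z)).lt_of_ne' hp
  have hdiff : DifferentiableAt ℝ (fun q => √(alph n q * bet n k q)) z :=
    (((differentiable_alph n).mul (differentiable_bet n k)) z).sqrt hp
  have heuler := fderiv_apply_self_of_homogeneous 2 hdiff (sqrt_alph_mul_bet_smul n k · z)
  have hradial := h z z
  rw [M1ext, if_neg hp] at hradial
  rw [fderiv_eq_zero_of_gradForm_self_eq_zero hradial] at heuler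
  have hf_pos : 0 < √(alph n z * bet n k z) := Real.sqrt_pos.mpr hpos
  push_cast at heuler
  linarith

/-- M₁ vanishes at (x,y) iff (x,y) ∈ L₁ ∪ L₂, i.e. iff αβ = 0. -/
theorem M1_vanishes_iff (n k : ℕ) (hk : k ≤ n) (z : Cn n) :
    (∀ v w : Cn n, M1ext n k z v w = 0) ↔ alph n z * bet n k z = 0 :=
  M1_vanishes_iff_general n k z
end
end
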